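/- Let K be a real symmetric N×N matrix satisfying 0 ⪯ K ⪯ κ I for some κ > 0, let P be a diagonal real N×N matrix whose diagonal entries p(i) satisfy p(i) ≥ p_min for some p_min > 0, and set A = P^{-1/2} K P^{-1/2}. Then I + A is invertible, and for any w₀ ∈ ℝ^N, the sequence defined by the iteration w_{m+1} = (p_min/(κ + p_min)) w₀ + (κ/(κ + p_min)) w_m − (p_min/(κ + p_min)) A w_m, starting from w₀, satisfies ‖w_m − (I + A)⁻¹ w₀‖₂ ≤ (κ/(κ + p_min))^{m+1} ‖w₀‖₂ for all m ≥ 0; in particular w_m converges to (I + A)⁻¹ w₀ exponentially. -/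

import Mathlib

open Matrix

/-- The Euclidean norm on `ℝ^N`. -/
noncomputable def euclNorm {N : ℕ} (v : Fin N → ℝ) : ℝ := Real.sqrt (∑ i, v i ^ 2)


lemma euclNorm_nonneg {N : ℕ} (v : Fin N → ℝ) : 0 ≤ euclNorm v := Real.sqrt_nonneg _

lemma abs_le_euclNorm {N : ℕ} (v : Fin N → ℝ) (i : Fin N) : |v i| ≤ euclNorm v := by
  rw [← Real.sqrt_sq_eq_abs]
  exact Real.sqrt_le_sqrt
    (Finset.single_le_sum (f := fun j => v j ^ 2) (fun j _ => sq_nonneg _) (Finset.mem_univ i))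

lemma conjD_mul {N : ℕ} (U : Matrix (Fin N) (Fin N) ℝ) (hU2 : star U * U = 1)
    (f g : Fin N → ℝ) :
    (U * diagonal f * star U) * (U * diagonal g * star U)
      = U * diagonal (fun i => f i * g i) * star U := by
  have h : diagonal f * (star U * U) * diagonal g = diagonal (fun i => f i * g i) := by
    rw [hU2, mul_one, diagonal_mul_diagonal]
  calc (U * diagonal f * star U) * (U * diagonal g * star U)
      = U * (diagonal f * (star U * U) * diagonal g) * star U := by noncomm_ring
    _ = U * diagonal (fun i => f i * g i) * star U := by rw [h]

lemma conjD_sub {N : ℕ} (U : Matrix (Fin N) (Fin N) ℝ) (f g : Fin N → ℝ) :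
    U * diagonal (fun i => f i - g i) * star U
      = U * diagonal f * star U - U * diagonal g * star U := by
  have h : diagonal (fun i => f i - g i) = diagonal f - diagonal g := by
    rw [diagonal_sub]
  rw [h]; noncomm_ring

lemma conjD_add {N : ℕ} (U : Matrix (Fin N) (Fin N) ℝ) (f g : Fin N → ℝ) :
    U * diagonal (fun i => f i + g i) * star U
      = U * diagonal f * star U + U * diagonal g * star U := by
  have h : diagonal (fun i => f i + g i) = diagonal f + diagonal g := by
    rw [diagonal_add]
  rw [h]; noncomm_ring

lemma conjD_one {N : ℕ} (U : Matrix (Fin N) (Fin N) ℝ) (hU1 : U * star U = 1) :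
    U * diagonal (fun _ => (1:ℝ)) * star U = 1 := by
  rw [diagonal_one, mul_one, hU1]

lemma conjD_smul {N : ℕ} (U : Matrix (Fin N) (Fin N) ℝ) (c : ℝ) (f : Fin N → ℝ) :
    U * diagonal (fun i => c * f i) * star U = c • (U * diagonal f * star U) := by
  have h : diagonal (fun i => c * f i) = c • diagonal f := by
    ext i j; by_cases hij : i = j <;> simp [diagonal, hij]
  rw [h, Matrix.mul_smul, Matrix.smul_mul]

lemma conjD_const {N : ℕ} (U : Matrix (Fin N) (Fin N) ℝ) (hU1 : U * star U = 1) (c : ℝ) :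
    U * diagonal (fun _ => c) * star U = c • (1 : Matrix (Fin N) (Fin N) ℝ) := by
  have := conjD_smul U c (fun _ => (1:ℝ))
  simpa [conjD_one U hU1, hU1] using this

lemma conjD_transpose {N : ℕ} (U : Matrix (Fin N) (Fin N) ℝ) (f : Fin N → ℝ) :
    (U * diagonal f * star U)ᵀ = U * diagonal f * star U := by
  have hs : star U = Uᵀ := by
    rw [Matrix.star_eq_conjTranspose, Matrix.conjTranspose]
    ext i j; simp
  rw [hs, Matrix.transpose_mul, Matrix.transpose_mul, Matrix.transpose_transpose,
    Matrix.diagonal_transpose, mul_assoc]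

lemma conjD_bound {N : ℕ} (U : Matrix (Fin N) (Fin N) ℝ)
    (hU1 : U * star U = 1) (hU2 : star U * U = 1)
    (f : Fin N → ℝ) (r : ℝ) (hr : 0 ≤ r) (hf0 : ∀ i, 0 ≤ f i) (hfr : ∀ i, f i ≤ r)
    (v : Fin N → ℝ) :
    euclNorm ((U * diagonal f * star U) *ᵥ v) ≤ r * euclNorm v := by
  set M := U * diagonal f * star U with hM
  have hpsd : (U * diagonal (fun i => r * r - f i * f i) * star U).PosSemidef := by
    have h := (Matrix.posSemidef_diagonal_iff.mpr
      (fun i => (by nlinarith [hf0 i, hfr i] : 0 ≤ r * r - f i * f i))).mul_mul_conjTranspose_same U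
    simpa [Matrix.star_eq_conjTranspose] using h
  have hone : (U * diagonal (fun _ => r * r) * star U)
      = (r * r) • (1 : Matrix (Fin N) (Fin N) ℝ) := conjD_const U hU1 _
  have hsplit : U * diagonal (fun i => r * r - f i * f i) * star U
      = (r * r) • (1 : Matrix (Fin N) (Fin N) ℝ) - M * M := by
    rw [conjD_sub, conjD_mul U hU2, hone]
  have key : (M *ᵥ v) ⬝ᵥ (M *ᵥ v) ≤ (r * r) * (v ⬝ᵥ v) := by
    have h0 := hpsd.dotProduct_mulVec_nonneg v
    rw [hsplit] at h0
    have hexp : star v ⬝ᵥ (((r * r) • (1 : Matrix (Fin N) (Fin N) ℝ) - M * M) *ᵥ v)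
        = (r * r) * (v ⬝ᵥ v) - v ⬝ᵥ ((M * M) *ᵥ v) := by
      rw [Matrix.sub_mulVec, dotProduct_sub, Matrix.smul_mulVec, Matrix.one_mulVec]
      simp [dotProduct_smul, star_trivial]
    rw [hexp] at h0
    have hT : Mᵀ = M := conjD_transpose U f
    have hMv : (M *ᵥ v) ⬝ᵥ (M *ᵥ v) = v ⬝ᵥ ((M * M) *ᵥ v) :=
      calc (M *ᵥ v) ⬝ᵥ (M *ᵥ v) = ((M *ᵥ v) ᵥ* M) ⬝ᵥ v := Matrix.dotProduct_mulVec _ M v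
        _ = (Mᵀ *ᵥ (M *ᵥ v)) ⬝ᵥ v := by rw [Matrix.mulVec_transpose]
        _ = ((M * M) *ᵥ v) ⬝ᵥ v := by rw [hT, Matrix.mulVec_mulVec]
        _ = v ⬝ᵥ ((M * M) *ᵥ v) := dotProduct_comm _ _
    linarith
  have h1 : euclNorm (M *ᵥ v) ^ 2 = (M *ᵥ v) ⬝ᵥ (M *ᵥ v) := by
    rw [euclNorm, Real.sq_sqrt (Fintype.sum_nonneg fun i => sq_nonneg _)]
    simp [dotProduct, pow_two]
  have h2 : euclNorm v ^ 2 = v ⬝ᵥ v := by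
    rw [euclNorm, Real.sq_sqrt (Fintype.sum_nonneg fun i => sq_nonneg _)]
    simp [dotProduct, pow_two]
  have h3 : euclNorm (M *ᵥ v) ^ 2 ≤ (r * euclNorm v) ^ 2 := by
    rw [h1, mul_pow, h2]
    calc (M *ᵥ v) ⬝ᵥ (M *ᵥ v) ≤ (r*r) * (v ⬝ᵥ v) := key
      _ = r ^ 2 * (v ⬝ᵥ v) := by ring
  have ha : 0 ≤ euclNorm (M *ᵥ v) := Real.sqrt_nonneg _
  have hb : 0 ≤ r * euclNorm v := mul_nonneg hr (Real.sqrt_nonneg _)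
  nlinarith [h3, ha, hb]

/-- if `0 ⪯ K ⪯ κ I` with `κ > 0`, `P = diag(p)` with
`p(i) ≥ p_min > 0`, and `A = P^{-1/2} K P^{-1/2}`, then `I + A` is invertible
and the iteration
`w_{m+1} = (p_min/(κ+p_min)) w₀ + (κ/(κ+p_min)) w_m − (p_min/(κ+p_min)) A w_m`
satisfies `‖w_m − (I+A)⁻¹ w₀‖₂ ≤ (κ/(κ+p_min))^{m+1} ‖w₀‖₂` for all `m ≥ 0`;
in particular `w_m → (I+A)⁻¹ w₀` exponentially. -/
theorem regularization_neumann_iteration {N : ℕ}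
    (K : Matrix (Fin N) (Fin N) ℝ) (κ : ℝ) (hκ : 0 < κ)
    (hK0 : K.PosSemidef)
    (hKκ : (κ • (1 : Matrix (Fin N) (Fin N) ℝ) - K).PosSemidef)
    (p : Fin N → ℝ) (pmin : ℝ) (hpmin : 0 < pmin) (hp : ∀ i, pmin ≤ p i)
    (Pih : Matrix (Fin N) (Fin N) ℝ)
    (hPih : Pih = Matrix.diagonal fun i => (Real.sqrt (p i))⁻¹)
    (A : Matrix (Fin N) (Fin N) ℝ) (hA : A = Pih * K * Pih)
    (w0 : Fin N → ℝ) (ws : ℕ → Fin N → ℝ)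
    (hws0 : ws 0 = w0)
    (hrec : ∀ m : ℕ, ws (m + 1)
      = (pmin / (κ + pmin)) • w0 + (κ / (κ + pmin)) • ws m
        - (pmin / (κ + pmin)) • A.mulVec (ws m)) :
    IsUnit (1 + A).det ∧
      (∀ m : ℕ, euclNorm (ws m - (1 + A)⁻¹.mulVec w0)
          ≤ (κ / (κ + pmin)) ^ (m + 1) * euclNorm w0) ∧
      Filter.Tendsto ws Filter.atTop (nhds ((1 + A)⁻¹.mulVec w0)) := by
  have hpi : ∀ i, 0 < p i := fun i => lt_of_lt_of_le hpmin (hp i)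
  have hPihH : Pihᴴ = Pih := by
    rw [hPih, diagonal_conjTranspose]; congr
  -- A is PSD
  have hA0 : A.PosSemidef := by
    rw [hA]
    have h := hK0.mul_mul_conjTranspose_same Pih
    rwa [hPihH] at h
  set c : ℝ := κ / pmin with hc
  have hc0 : 0 < c := div_pos hκ hpmin
  -- c • 1 - A is PSD
  have hPih2 : Pih * Pih = diagonal (fun i => (p i)⁻¹) := by
    have hfun : (fun i => (Real.sqrt (p i))⁻¹ * (Real.sqrt (p i))⁻¹) = fun i => (p i)⁻¹ := by
      funext i; rw [← mul_inv, Real.mul_self_sqrt (hpi i).le]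
    rw [hPih, diagonal_mul_diagonal, hfun]
  have hmid : Pih * (κ • (1 : Matrix (Fin N) (Fin N) ℝ) - K) * Pih
      = diagonal (fun i => κ * (p i)⁻¹) - A := by
    have h1 : Pih * (κ • (1 : Matrix (Fin N) (Fin N) ℝ)) * Pih = κ • (Pih * Pih) := by
      rw [Matrix.mul_smul, mul_one, Matrix.smul_mul]
    have h2 : κ • diagonal (fun i => (p i)⁻¹) = diagonal (fun i => κ * (p i)⁻¹) := by
      ext i j; by_cases hij : i = j <;> simp [diagonal, hij]
    rw [Matrix.mul_sub, Matrix.sub_mul, h1, hPih2, h2, hA]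
  have hAc : (c • (1 : Matrix (Fin N) (Fin N) ℝ) - A).PosSemidef := by
    have h1 : (diagonal (fun i => c - κ * (p i)⁻¹)).PosSemidef := by
      refine posSemidef_diagonal_iff.mpr (fun i => ?_)
      have hle : κ * (p i)⁻¹ ≤ κ * pmin⁻¹ :=
        mul_le_mul_of_nonneg_left (inv_anti₀ hpmin (hp i)) hκ.le
      rw [hc, div_eq_mul_inv]; linarith
    have h2 : (Pih * (κ • (1 : Matrix (Fin N) (Fin N) ℝ) - K) * Pih).PosSemidef := by
      have h := hKκ.mul_mul_conjTranspose_same Pih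
      rwa [hPihH] at h
    have heq : c • (1 : Matrix (Fin N) (Fin N) ℝ) - A
        = diagonal (fun i => c - κ * (p i)⁻¹)
          + Pih * (κ • (1 : Matrix (Fin N) (Fin N) ℝ) - K) * Pih := by
      rw [hmid]
      have hd : diagonal (fun i => c - κ * (p i)⁻¹)
          = diagonal (fun _ : Fin N => c) - diagonal (fun i => κ * (p i)⁻¹) := by
        ext i j; by_cases hij : i = j <;> simp [diagonal, hij]
      have hone : diagonal (fun _ : Fin N => c) = c • (1 : Matrix (Fin N) (Fin N) ℝ) := by
        ext i j; by_cases hij : i = j <;> simp [diagonal, hij]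
      rw [hd, hone]; abel
    rw [heq]; exact h1.add h2
  -- spectral data
  have hH : A.IsHermitian := hA0.1
  set U : Matrix (Fin N) (Fin N) ℝ := (hH.eigenvectorUnitary : Matrix (Fin N) (Fin N) ℝ) with hUdef
  set lam : Fin N → ℝ := hH.eigenvalues with hlamdef
  have hU1 : U * star U = 1 := Unitary.mul_star_self_of_mem hH.eigenvectorUnitary.2
  have hU2 : star U * U = 1 := Unitary.star_mul_self_of_mem hH.eigenvectorUnitary.2
  have hspec : A = U * diagonal lam * star U := by
    have := hH.spectral_theorem
    simpa using this
  have hlam0 : ∀ i, 0 ≤ lam i := fun i => hA0.eigenvalues_nonneg i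
  have hlamc : ∀ i, lam i ≤ c := by
    intro i
    set v : Fin N → ℝ := fun j => hH.eigenvectorBasis i j with hvdef
    have h := hAc.dotProduct_mulVec_nonneg v
    have hv : A *ᵥ v = lam i • v := hH.mulVec_eigenvectorBasis i
    have hnorm : v ⬝ᵥ v = 1 := by
      have h1 := hH.eigenvectorBasis.orthonormal.1 i
      have h2 : (inner ℝ (hH.eigenvectorBasis i) (hH.eigenvectorBasis i) : ℝ) = 1 := by
        rw [inner_self_eq_norm_sq_to_K]; simp [h1]
      rw [EuclideanSpace.inner_eq_star_dotProduct] at h2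
      simpa [dotProduct_comm] using h2
    rw [Matrix.sub_mulVec, dotProduct_sub, hv, Matrix.smul_mulVec, Matrix.one_mulVec] at h
    simp only [star_trivial, dotProduct_smul, smul_eq_mul, hnorm] at h
    linarith
  -- inverse of 1 + A
  have hlam1 : ∀ i, (0:ℝ) < 1 + lam i := fun i => by linarith [hlam0 i]
  have honeA : (1 : Matrix (Fin N) (Fin N) ℝ) + A
      = U * diagonal (fun i => 1 + lam i) * star U := by
    rw [conjD_add, conjD_one U hU1, ← hspec]
  set R : Matrix (Fin N) (Fin N) ℝ := U * diagonal (fun i => (1 + lam i)⁻¹) * star U with hRdef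
  have hRA : ((1 : Matrix (Fin N) (Fin N) ℝ) + A) * R = 1 := by
    rw [honeA, hRdef, conjD_mul U hU2]
    have : (fun i => (1 + lam i) * (1 + lam i)⁻¹) = fun _ => (1:ℝ) := by
      funext i; exact mul_inv_cancel₀ (hlam1 i).ne'
    rw [this, conjD_one U hU1]
  have hdet : IsUnit ((1 : Matrix (Fin N) (Fin N) ℝ) + A).det :=
    Matrix.isUnit_det_of_right_inverse hRA
  have hinv : ((1 : Matrix (Fin N) (Fin N) ℝ) + A)⁻¹ = R := Matrix.inv_eq_right_inv hRA
  set W : Fin N → ℝ := ((1 : Matrix (Fin N) (Fin N) ℝ) + A)⁻¹ *ᵥ w0 with hWdef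
  have hWR : W = R *ᵥ w0 := by rw [hWdef, hinv]
  have hw0W : w0 = W + A *ᵥ W := by
    have : ((1 : Matrix (Fin N) (Fin N) ℝ) + A) *ᵥ W = w0 := by
      rw [hWR, Matrix.mulVec_mulVec, hRA, Matrix.one_mulVec]
    rw [← this, Matrix.add_mulVec, Matrix.one_mulVec]
  -- the contraction parameters
  set q : ℝ := pmin / (κ + pmin) with hqdef
  set r : ℝ := κ / (κ + pmin) with hrdef
  have hκp : 0 < κ + pmin := by linarith
  have hq0 : 0 < q := div_pos hpmin hκp
  have hr0 : 0 ≤ r := (div_pos hκ hκp).le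
  have hr1 : r < 1 := by rw [hrdef, div_lt_one hκp]; linarith
  have hqc : q * c = r := by
    rw [hqdef, hc, hrdef]
    rw [div_mul_div_comm, div_eq_div_iff (by positivity) (by positivity)]
    ring
  -- initial error
  have hE0 : ws 0 - W = (U * diagonal (fun i => lam i * (1 + lam i)⁻¹) * star U) *ᵥ w0 := by
    have hfun : (fun i => lam i * (1 + lam i)⁻¹) = fun i => 1 - (1 + lam i)⁻¹ := by
      funext i
      have h0 : (1 : ℝ) + lam i ≠ 0 := (hlam1 i).ne'
      field_simp
      ring
    rw [hws0, hfun, conjD_sub, conjD_one U hU1, Matrix.sub_mulVec, Matrix.one_mulVec, ← hRdef,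
      ← hWR]
  have hbound0 : euclNorm (ws 0 - W) ≤ r * euclNorm w0 := by
    rw [hE0]
    refine conjD_bound U hU1 hU2 _ r hr0 (fun i => ?_) (fun i => ?_) w0
    · exact mul_nonneg (hlam0 i) (inv_nonneg.mpr (hlam1 i).le)
    · have hpml : lam i * pmin ≤ κ := by
        have h := mul_le_mul_of_nonneg_right (hlamc i) hpmin.le
        rwa [hc, div_mul_cancel₀ _ hpmin.ne'] at h
      rw [← div_eq_mul_inv, hrdef, div_le_div_iff₀ (hlam1 i) hκp]
      nlinarith [hlam0 i]
  -- the iteration matrix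
  set M : Matrix (Fin N) (Fin N) ℝ := U * diagonal (fun i => r - q * lam i) * star U with hMdef
  have hMform : M = r • (1 : Matrix (Fin N) (Fin N) ℝ) - q • A := by
    rw [hMdef, conjD_sub, conjD_const U hU1, conjD_smul, ← hspec]
  have hstep : ∀ m, ws (m + 1) - W = M *ᵥ (ws m - W) := by
    intro m
    rw [hrec m, hMform]
    rw [Matrix.sub_mulVec, Matrix.smul_mulVec, Matrix.one_mulVec,
      Matrix.smul_mulVec, Matrix.mulVec_sub]
    rw [hw0W]
    have hne : pmin + κ ≠ 0 := by positivity
    match_scalars <;> simp only [hqdef, hrdef] <;> field_simp <;> ring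
  -- main bound by induction
  have hmain : ∀ m, euclNorm (ws m - W) ≤ r ^ (m + 1) * euclNorm w0 := by
    intro m
    induction m with
    | zero => simpa [pow_one] using hbound0
    | succ n ih =>
      rw [hstep n]
      have hb := conjD_bound U hU1 hU2 (fun i => r - q * lam i) r hr0
        (fun i => by
          show 0 ≤ r - q * lam i
          have : q * lam i ≤ q * c := mul_le_mul_of_nonneg_left (hlamc i) hq0.le
          rw [hqc] at this; linarith)
        (fun i => by
          show r - q * lam i ≤ r
          nlinarith [hlam0 i, hq0.le]) (ws n - W)
      calc euclNorm (M *ᵥ (ws n - W)) ≤ r * euclNorm (ws n - W) := hb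
        _ ≤ r * (r ^ (n + 1) * euclNorm w0) := by
            exact mul_le_mul_of_nonneg_left ih hr0
        _ = r ^ (n + 1 + 1) * euclNorm w0 := by ring
  refine ⟨hdet, hmain, ?_⟩
  -- convergence
  rw [tendsto_iff_norm_sub_tendsto_zero]
  have hnb : ∀ m, ‖ws m - W‖ ≤ r ^ (m + 1) * euclNorm w0 := by
    intro m
    refine (pi_norm_le_iff_of_nonneg
      (mul_nonneg (pow_nonneg hr0 _) (euclNorm_nonneg w0))).mpr (fun i => ?_)
    calc ‖(ws m - W) i‖ = |(ws m - W) i| := rfl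
      _ ≤ euclNorm (ws m - W) := abs_le_euclNorm _ i
      _ ≤ r ^ (m + 1) * euclNorm w0 := hmain m
  have hlim : Filter.Tendsto (fun m : ℕ => r ^ (m + 1) * euclNorm w0)
      Filter.atTop (nhds 0) := by
    have h1 : Filter.Tendsto (fun m : ℕ => r ^ (m + 1)) Filter.atTop (nhds 0) :=
      (tendsto_pow_atTop_nhds_zero_of_lt_one hr0 hr1).comp (Filter.tendsto_add_atTop_nat 1)
    simpa using h1.mul_const (euclNorm w0)
  exact squeeze_zero (fun m => norm_nonneg _) hnb hlim
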